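/- In the Diaconis–Fulton (site-wise) representation of Activated Random Walks, if η ≤ η' are two particle configurations on a graph (pointwise, for the order 0 < 𝔰 < 1 < 2 < ⋯ on ℕ ∪ {𝔰}) and U is a subset of vertices, then for any fixed field of toppling instructions τ, the odometer satisfies m^τ_{U,η} ≤ m^τ_{U,η'} pointwise. -/
import Mathlib


/-- The state of a site: `act m` means `m` active particles, `sleep` means one
sleeping particle. -/
inductive SiteState : Type
  | act : ℕ → SiteState
  | sleep : SiteState
deriving DecidableEq

/-- The rank of a site state for the total order `0 < 𝔰 < 1 < 2 < ⋯`. -/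
def SiteState.rank : SiteState → ℕ
  | .act 0 => 0
  | .sleep => 1
  | .act (n + 1) => n + 2

/-- A toppling instruction: either a sleep instruction or a jump instruction
towards a vertex. -/
inductive Instr (V : Type*) : Type _
  | sleep : Instr V
  | jump : V → Instr V

variable {V : Type*} [DecidableEq V]

/-- Removing one particle from a site (with the convention `𝔰 − 1 = 0`). -/
def SiteState.dec : SiteState → SiteState
  | .act (n + 1) => .act n
  | .act 0 => .act 0
  | .sleep => .act 0

/-- Adding one (active) particle to a site: a sleeping particle is woken up. -/
def SiteState.inc : SiteState → SiteState
  | .act n => .act (n + 1)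
  | .sleep => .act 2

/-- The effect of an instruction performed at site `x` on the configuration `η`:
a sleep instruction puts a lone active particle at `x` to sleep, a jump
instruction moves one particle from `x` to its target. -/
def applyInstr (ins : Instr V) (x : V) (η : V → SiteState) : V → SiteState :=
  match ins with
  | .sleep => if η x = .act 1 then Function.update η x .sleep else η
  | .jump y =>
      let η' := Function.update η x (SiteState.dec (η x))
      Function.update η' y (SiteState.inc (η' y))

/-- Toppling the site `x`: apply the next unused instruction of the stack at `x`
and increment the odometer there. -/
def topple (τ : V → ℕ → Instr V) (x : V) (s : (V → SiteState) × (V → ℕ)) :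
    (V → SiteState) × (V → ℕ) :=
  (applyInstr (τ x (s.2 x)) x s.1, Function.update s.2 x (s.2 x + 1))

/-- Running a sequence of topplings. -/
def runSeq (τ : V → ℕ → Instr V) : List V → ((V → SiteState) × (V → ℕ)) →
    (V → SiteState) × (V → ℕ)
  | [], s => s
  | x :: α, s => runSeq τ α (topple τ x s)

/-- A toppling sequence is legal if each toppling happens at a currently
unstable site (a site holding at least one active particle). -/
def LegalSeq (τ : V → ℕ → Instr V) : List V → ((V → SiteState) × (V → ℕ)) → Prop
  | [], _ => True
  | x :: α, s => 2 ≤ (s.1 x).rank ∧ LegalSeq τ α (topple τ x s)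

/-- A toppling sequence is acceptable if each toppling happens at a currently
occupied site (holding at least a sleeping particle). -/
def AcceptableSeq (τ : V → ℕ → Instr V) : List V → ((V → SiteState) × (V → ℕ)) → Prop
  | [], _ => True
  | x :: α, s => 1 ≤ (s.1 x).rank ∧ AcceptableSeq τ α (topple τ x s)

/-- A configuration is stable in `U` if every site of `U` holds either no particle
or one sleeping particle. -/
def StableIn (U : Set V) (η : V → SiteState) : Prop :=
  ∀ x ∈ U, (η x).rank ≤ 1

lemma SiteState.rank_act (n : ℕ) : (SiteState.act n).rank = if n = 0 then 0 else n + 1 := by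
  cases n <;> simp [SiteState.rank]

lemma SiteState.rank_dec_mono {a b : SiteState} (hab : a.rank ≤ b.rank) :
    a.dec.rank ≤ b.dec.rank := by
  rcases a with (_ | _ | n) | _ <;> rcases b with (_ | _ | m) | _ <;>
    simp_all [SiteState.dec, SiteState.rank]

lemma SiteState.rank_inc_mono {a b : SiteState} (hab : a.rank ≤ b.rank) :
    a.inc.rank ≤ b.inc.rank := by
  rcases a with (_ | _ | n) | _ <;> rcases b with (_ | _ | m) | _ <;>
    simp_all [SiteState.inc, SiteState.rank]

lemma SiteState.eq_act_one {a : SiteState} (h1 : a.rank ≤ 2) (h2 : a ≠ .act 1) :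
    a.rank ≤ 1 := by
  rcases a with (_ | _ | n) | _ <;> simp_all [SiteState.rank]

lemma applyInstr_mono (ins : Instr V) (x : V) {η η' : V → SiteState}
    (h : ∀ y, (η y).rank ≤ (η' y).rank) :
    ∀ y, ((applyInstr ins x η) y).rank ≤ ((applyInstr ins x η' ) y).rank := by
  intro y
  cases ins with
  | sleep =>
      simp only [applyInstr]
      by_cases h1 : η x = .act 1 <;> by_cases h2 : η' x = .act 1 <;>
        simp only [h1, h2, if_pos, if_neg, if_true, if_false] <;>
        by_cases hy : y = x
      · subst hy; simp [h1, h2]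
      · simp [Function.update_of_ne hy]; exact h y
      · subst hy
        simp only [Function.update_self]
        have := h y
        rw [h1] at this
        exact le_trans (by decide) this
      · simp [Function.update_of_ne hy]; exact h y
      · subst hy
        simp only [Function.update_self]
        have := h y
        rw [h2] at this
        exact SiteState.eq_act_one this h1
      · simp [Function.update_of_ne hy]; exact h y
      · exact h y
      · exact h y
  | jump z =>
      simp only [applyInstr]
      by_cases hy : y = z
      · subst hy
        simp only [Function.update_self]
        apply SiteState.rank_inc_mono
        by_cases hzx : y = x
        · subst hzx; simp only [Function.update_self]
          exact SiteState.rank_dec_mono (h y)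
        · simp only [Function.update_of_ne hzx]; exact h y
      · simp only [Function.update_of_ne hy]
        by_cases hyx : y = x
        · subst hyx; simp only [Function.update_self]
          exact SiteState.rank_dec_mono (h y)
        · simp only [Function.update_of_ne hyx]; exact h y

lemma legal_mono (τ : V → ℕ → Instr V) :
    ∀ (α : List V) (η η' : V → SiteState) (c : V → ℕ),
      (∀ y, (η y).rank ≤ (η' y).rank) →
      LegalSeq τ α (η, c) → LegalSeq τ α (η', c)
  | [], _, _, _, _, _ => trivial
  | x :: α, η, η', c, h, ⟨hx, hα⟩ =>
    ⟨le_trans hx (h x), by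
      have := legal_mono τ α _ _ (Function.update c x (c x + 1))
        (applyInstr_mono (τ x (c x)) x h) hα
      simpa [topple] using this⟩

/-- Monotonicity of the odometer in the Diaconis–Fulton representation: if `η ≤ η'`
pointwise (for the order `0 < 𝔰 < 1 < 2 < ⋯`), then for any field of instructions
`τ` and any set `U` of vertices, the odometer `m^τ_{U,η}` — the supremum, over legal
toppling sequences contained in `U`, of the number of topplings at each site — is
pointwise at most `m^τ_{U,η'}`. -/
theorem stmt14 {V : Type*} [DecidableEq V] (τ : V → ℕ → Instr V) (U : Set V)
    (η η' : V → SiteState) (h : ∀ x, (η x).rank ≤ (η' x).rank) (x : V) :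
    (⨆ α : {α : List V // (∀ y ∈ α, y ∈ U) ∧ LegalSeq τ α (η, fun _ => 0)},
        ((α : List V).count x : ℕ∞))
      ≤ ⨆ α : {α : List V // (∀ y ∈ α, y ∈ U) ∧ LegalSeq τ α (η', fun _ => 0)},
          ((α : List V).count x : ℕ∞) := by
  apply iSup_le
  rintro ⟨α, hU, hleg⟩
  exact le_iSup_of_le ⟨α, hU, legal_mono τ α η η' _ h hleg⟩ le_rfl
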